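/- Fix an integer n ≥ 3 and natural numbers m_P, m_F with m_P + m_F ≥ 2. There exists a real number M, depending only on n, m_P, and m_F, with the following property: for any even integers k_1, …, k_{m_P} ≥ 4 and any Deligne-bounded cusp sequences a_1, …, a_{m_F} : ℕ → ℂ of even weights ℓ_1, …, ℓ_{m_F} (each ℓ_i ≥ 12), if the total weight ℓ = k_1 + ⋯ + k_{m_P} + ℓ_1 + ⋯ + ℓ_{m_F} satisfies ℓ > M, then the Cauchy convolution of all these sequences satisfies |(e_{k_1} ∗ ⋯ ∗ e_{k_{m_P}} ∗ a_1 ∗ ⋯ ∗ a_{m_F})(n)| ≤ n^{ℓ/2 − 1}. -/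

import Mathlib

/-- The `q`-coefficient constant of the weight `k` Eisenstein series:
`C_k = (2πi)^k / ((k-1)! ζ(k))`. -/
noncomputable def eisC (k : ℕ) : ℂ :=
  (2 * Real.pi * Complex.I) ^ k / ((Nat.factorial (k - 1) : ℂ) * riemannZeta k)

/-- The `q`-expansion of the normalized weight `k` Eisenstein series, as a formal power
series: constant coefficient `1`, and `n`-th coefficient `C_k σ_{k-1}(n)` for `n ≥ 1`. -/
noncomputable def eisPS (k : ℕ) : PowerSeries ℂ :=
  PowerSeries.mk fun n => if n = 0 then 1 else eisC k * ∑ d ∈ n.divisors, (d : ℂ) ^ (k - 1)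

/-- `a : ℕ → ℂ` is a Deligne-bounded cusp sequence of weight `ℓ` if `ℓ` is an even
integer `≥ 12`, `a 0 = 0`, and `|a n| ≤ 2 n^(ℓ/2)` for all `n ≥ 1`. -/
def IsDeligneCusp (a : ℕ → ℂ) (ℓ : ℕ) : Prop :=
  Even ℓ ∧ 12 ≤ ℓ ∧ a 0 = 0 ∧
    ∀ n : ℕ, 1 ≤ n → ‖a n‖ ≤ 2 * (n : ℝ) ^ ((ℓ : ℝ) / 2)

/-!
For `p ≤ n` the `p`-th coefficient of an Eisenstein product is bounded independently of the
weights, because `|C_k| σ_{k-1}(p) ≤ (2πp)^k / (k-1)! ≤ e^{4πp}`; its constant term is `1`.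
A cusp sequence vanishes at `0`, so a product of `m_F` of them is `q^{m_F}` times a series, and
its coefficients of index `< n` (of index `n` as well when `m_F ≥ 2`) are `O((n-1)^{L/2})`.
Thus the only term of size `n^{L/2}` is `e_0 a_1(n)` when `m_F = 1`; then `m_P ≥ 1`, and
`n^{K/2-1} ≥ n ≥ 3` absorbs the Deligne constant `2`. The remaining terms are
`O(((n-1)/n)^{L/2} n^{L/2})`, which `n^{(K+L)/2-1}` beats once `K` or `L` is large.
-/

open Finset PowerSeries Real Nat Filter

namespace PowerSeries

variable {R : Type*}

theorem norm_coeff_mul_le [SeminormedRing R] (f g : R⟦X⟧) {n : ℕ} {A B : ℝ}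
    (hf : ∀ p ≤ n, ‖coeff p f‖ ≤ A) (hg : ∀ q ≤ n, ‖coeff q g‖ ≤ B) :
    ‖coeff n (f * g)‖ ≤ (n + 1) * (A * B) := by
  have hA : 0 ≤ A := (norm_nonneg _).trans (hf 0 n.zero_le)
  calc ‖coeff n (f * g)‖
      ≤ ∑ x ∈ antidiagonal n, ‖coeff x.1 f‖ * ‖coeff x.2 g‖ := by
        rw [coeff_mul]; exact norm_sum_le_of_le _ fun x _ => norm_mul_le _ _
    _ ≤ ∑ _x ∈ antidiagonal n, A * B := by
        refine sum_le_sum fun x hx => ?_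
        have hx := mem_antidiagonal.mp hx
        exact mul_le_mul (hf _ (by omega)) (hg _ (by omega)) (norm_nonneg _) hA
    _ = (n + 1) * (A * B) := by simp

theorem norm_coeff_mul_le_norm_coeff_add [SeminormedRing R] {f g : R⟦X⟧}
    (hf₀ : constantCoeff f = 1) {n : ℕ} {A B : ℝ} (hf : ∀ p ≤ n, ‖coeff p f‖ ≤ A)
    (hg : ∀ q < n, ‖coeff q g‖ ≤ B) :
    ‖coeff n (f * g)‖ ≤ ‖coeff n g‖ + n * (A * B) := by
  rw [eq_X_mul_shift_add_const f, hf₀, map_one, add_mul, one_mul, mul_assoc, map_add, add_comm]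
  cases n with
  | zero => simp
  | succ m =>
    rw [coeff_succ_X_mul]
    refine (norm_add_le _ _).trans (add_le_add_right ?_ _)
    push_cast
    exact norm_coeff_mul_le _ _ (fun p hp => by simpa using hf (p + 1) (by omega))
      fun q hq => hg q (by omega)

theorem norm_coeff_prod_le [SeminormedCommRing R] [NormOneClass R] {ι : Type*} (s : Finset ι)
    (f : ι → R⟦X⟧) (A : ι → ℝ) {N : ℕ} (h : ∀ i ∈ s, ∀ p < N, ‖coeff p (f i)‖ ≤ A i) :
    ∀ p < N, ‖coeff p (∏ i ∈ s, f i)‖ ≤ ∏ i ∈ s, (N * A i) := by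
  induction s using Finset.cons_induction with
  | empty =>
    intro p _
    rw [prod_empty, prod_empty, coeff_one]
    split_ifs <;> simp
  | cons a s ha ih =>
    intro p hp
    have ih := ih fun i hi => h i (mem_cons_of_mem hi)
    have ha := h a (mem_cons_self a s)
    have hnonneg : 0 ≤ A a * ∏ i ∈ s, (N * A i) :=
      mul_nonneg ((norm_nonneg _).trans (ha 0 (by omega)))
        ((norm_nonneg _).trans (ih 0 (by omega)))
    rw [prod_cons, prod_cons, mul_assoc]
    calc ‖coeff p (f a * ∏ i ∈ s, f i)‖
        ≤ (p + 1) * (A a * ∏ i ∈ s, (N * A i)) :=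
          norm_coeff_mul_le _ _ (fun q hq => ha q (by omega)) fun q hq => ih q (by omega)
      _ ≤ N * (A a * ∏ i ∈ s, (N * A i)) := by
          gcongr
          exact_mod_cast hp

end PowerSeries

theorem one_le_norm_riemannZeta_natCast {k : ℕ} (hk : 1 < k) : 1 ≤ ‖riemannZeta k‖ := by
  have hsum : Summable fun m : ℕ => 1 / (m : ℝ) ^ k := Real.summable_one_div_nat_pow.mpr hk
  have hreal : riemannZeta k = ((∑' m : ℕ, 1 / (m : ℝ) ^ k : ℝ) : ℂ) := by
    rw [zeta_nat_eq_tsum_of_gt_one hk, Complex.ofReal_tsum]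
    push_cast
    rfl
  rw [hreal, Complex.norm_real, Real.norm_eq_abs]
  calc (1 : ℝ) = 1 / ((1 : ℕ) : ℝ) ^ k := by simp
    _ ≤ ∑' m : ℕ, 1 / (m : ℝ) ^ k := hsum.le_tsum 1 fun m _ => by positivity
    _ ≤ _ := le_abs_self _

theorem norm_eisC_le {k : ℕ} (hk : 1 < k) : ‖eisC k‖ ≤ (2 * π) ^ k / (k - 1)! := by
  rw [eisC, norm_div, norm_mul, norm_pow, norm_mul, norm_mul, Complex.norm_I, Complex.norm_two,
    Complex.norm_real, Real.norm_of_nonneg pi_pos.le, mul_one, Complex.norm_natCast]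
  gcongr
  exact le_mul_of_one_le_right (by positivity) (one_le_norm_riemannZeta_natCast hk)

@[simp]
theorem constantCoeff_eisPS (k : ℕ) : constantCoeff (eisPS k) = 1 := by
  simp [eisPS]

theorem norm_coeff_eisPS_le {k : ℕ} (hk : 1 < k) (p : ℕ) :
    ‖coeff p (eisPS k)‖ ≤ exp (4 * π * p) := by
  rcases eq_or_ne p 0 with rfl | hp
  · simp [eisPS]
  obtain ⟨j, rfl⟩ : ∃ j, k = j + 1 := ⟨k - 1, by omega⟩
  have hσ : ∑ d ∈ p.divisors, (d : ℂ) ^ j = ((ArithmeticFunction.sigma j p : ℕ) : ℂ) := by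
    simp [ArithmeticFunction.sigma_apply]
  have hσle : (ArithmeticFunction.sigma j p : ℝ) ≤ (p : ℝ) ^ (j + 1) := by
    exact_mod_cast ArithmeticFunction.sigma_le_pow_succ j p
  set x : ℝ := 2 * π * p
  have hx : 0 ≤ x := by positivity
  rw [eisPS, coeff_mk, if_neg hp, norm_mul, Nat.add_sub_cancel, hσ, Complex.norm_natCast]
  calc ‖eisC (j + 1)‖ * (ArithmeticFunction.sigma j p : ℝ)
      ≤ (2 * π) ^ (j + 1) / j ! * (p : ℝ) ^ (j + 1) := by
        gcongr
        simpa using norm_eisC_le hk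
    _ = x * (x ^ j / j !) := by ring
    _ ≤ exp x * exp x := by
        gcongr
        · linarith [add_one_le_exp x]
        · exact pow_div_factorial_le_exp x hx j
    _ = exp (4 * π * p) := by rw [← exp_add]; congr 1; ring

theorem norm_coeff_prod_eisPS_le {ι : Type*} [Fintype ι] {k : ι → ℕ} (hk : ∀ i, 1 < k i)
    {n p : ℕ} (hp : p ≤ n) :
    ‖coeff p (∏ i, eisPS (k i))‖ ≤ ((n + 1) * exp (4 * π * n)) ^ Fintype.card ι := by
  have h := norm_coeff_prod_le univ (fun i => eisPS (k i)) (fun _ => exp (4 * π * n))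
    (N := n + 1) (fun i _ q hq => (norm_coeff_eisPS_le (hk i) q).trans (by gcongr; omega))
    p (by omega)
  simpa using h

theorem IsDeligneCusp.norm_succ_le {a : ℕ → ℂ} {ℓ : ℕ} (h : IsDeligneCusp a ℓ) {N p : ℕ}
    (hp : p < N) : ‖a (p + 1)‖ ≤ 2 * (N : ℝ) ^ ((ℓ : ℝ) / 2) := by
  refine (h.2.2.2 (p + 1) (by omega)).trans ?_
  gcongr
  exact_mod_cast hp

theorem IsDeligneCusp.mk_eq_X_mul {a : ℕ → ℂ} {ℓ : ℕ} (h : IsDeligneCusp a ℓ) :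
    PowerSeries.mk a = X * PowerSeries.mk fun p => a (p + 1) := by
  ext (_ | p)
  · simp [h.2.2.1]
  · rw [coeff_succ_X_mul, coeff_mk, coeff_mk]

theorem norm_coeff_prod_mk_le {ι : Type*} [Fintype ι] {a : ι → ℕ → ℂ} {ℓ : ι → ℕ}
    (h : ∀ j, IsDeligneCusp (a j) (ℓ j)) {N q : ℕ} (hq : q < N + Fintype.card ι) :
    ‖coeff q (∏ j, PowerSeries.mk (a j))‖ ≤
      (2 * N) ^ Fintype.card ι * (N : ℝ) ^ (((∑ j, ℓ j : ℕ) : ℝ) / 2) := by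
  simp_rw [fun j => (h j).mk_eq_X_mul]
  rw [prod_mul_distrib, prod_const, Finset.card_univ, coeff_X_pow_mul']
  split_ifs with hle
  · calc _ ≤ ∏ j, (N * (2 * (N : ℝ) ^ ((ℓ j : ℝ) / 2))) :=
          norm_coeff_prod_le univ _ _ (fun j _ p hp => by
            rw [coeff_mk]; exact (h j).norm_succ_le hp) _ (by omega)
      _ = _ := by
          rw [Nat.cast_sum, sum_div, Real.rpow_sum_of_nonneg (by positivity)
            fun j _ => by positivity, ← Finset.card_univ, ← prod_const, ← prod_mul_distrib]
          congr 1 with j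
          ring
  · simp only [norm_zero]
    positivity

theorem exists_forall_rpow_le {x r C : ℝ} (hx : 3 ≤ x) (hr₀ : 0 ≤ r) (hr₁ : r < 1) (hC : 0 ≤ C) :
    ∃ M : ℝ, ∀ K L : ℕ, M < ((K + L : ℕ) : ℝ) →
      C * r ^ ((L : ℝ) / 2) ≤ x ^ ((K : ℝ) / 2 - 1) ∧
        (4 ≤ K → 2 + C * r ^ ((L : ℝ) / 2) ≤ x ^ ((K : ℝ) / 2 - 1)) := by
  have hhalf : Tendsto (fun m : ℕ => (m : ℝ) / 2) atTop atTop :=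
    tendsto_natCast_atTop_atTop.atTop_div_const two_pos
  obtain ⟨K₀, hK₀⟩ := eventually_atTop.mp <|
    ((tendsto_rpow_atTop_of_base_gt_one x (by linarith)).comp
      (tendsto_atTop_add_const_right _ (-1) hhalf)).eventually_ge_atTop (C + 2)
  obtain ⟨L₀, hL₀⟩ := eventually_atTop.mp <|
    (((tendsto_rpow_atTop_of_base_lt_one r (by linarith) hr₁).comp hhalf).const_mul C).eventually
      (ge_mem_nhds (by rw [mul_zero]; positivity : C * 0 < x⁻¹))
  refine ⟨(K₀ + L₀ : ℕ), fun K L hKL => ?_⟩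
  have hrL : r ^ ((L : ℝ) / 2) ≤ 1 := Real.rpow_le_one hr₀ hr₁.le (by positivity)
  have hKL : K₀ ≤ K ∨ L₀ ≤ L := by
    have : K₀ + L₀ < K + L := by exact_mod_cast hKL
    omega
  rcases hKL with hK | hL
  · have hxK : C + 2 ≤ x ^ ((K : ℝ) / 2 - 1) := by simpa [sub_eq_add_neg] using hK₀ K hK
    have hCr : C * r ^ ((L : ℝ) / 2) ≤ C := mul_le_of_le_one_right hC hrL
    exact ⟨by linarith, fun _ => by linarith⟩
  · have hCr : C * r ^ ((L : ℝ) / 2) ≤ x⁻¹ := hL₀ L hL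
    have hx_inv : x⁻¹ ≤ x ^ ((K : ℝ) / 2 - 1) := by
      rw [← Real.rpow_neg_one]
      exact Real.rpow_le_rpow_of_exponent_le (by linarith) (by linarith [K.cast_nonneg (α := ℝ)])
    refine ⟨hCr.trans hx_inv, fun hK => ?_⟩
    have hK : (4 : ℝ) ≤ K := by exact_mod_cast hK
    have hxK : x ≤ x ^ ((K : ℝ) / 2 - 1) := by
      conv_lhs => rw [← Real.rpow_one x]
      exact Real.rpow_le_rpow_of_exponent_le (by linarith) (by linarith)
    have : x⁻¹ ≤ 1 := inv_le_one_of_one_le₀ (by linarith)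
    linarith

theorem exists_forall_mul_rpow_le {x y C : ℝ} (hx : 3 ≤ x) (hy : 0 ≤ y) (hyx : y < x)
    (hC : 0 ≤ C) :
    ∃ M : ℝ, ∀ K L : ℕ, M < ((K + L : ℕ) : ℝ) →
      C * y ^ ((L : ℝ) / 2) ≤ x ^ (((K + L : ℕ) : ℝ) / 2 - 1) ∧
        (4 ≤ K → 2 * x ^ ((L : ℝ) / 2) + C * y ^ ((L : ℝ) / 2) ≤
          x ^ (((K + L : ℕ) : ℝ) / 2 - 1)) := by
  have hx₀ : 0 < x := by linarith
  obtain ⟨M, hM⟩ := exists_forall_rpow_le hx (div_nonneg hy hx₀.le)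
    ((div_lt_one hx₀).mpr hyx) hC
  refine ⟨M, fun K L hKL => ?_⟩
  obtain ⟨hsmall, hsmall_of_four_le⟩ := hM K L hKL
  have hxL : 0 ≤ x ^ ((L : ℝ) / 2) := by positivity
  have hsplit : x ^ (((K + L : ℕ) : ℝ) / 2 - 1) = x ^ ((K : ℝ) / 2 - 1) * x ^ ((L : ℝ) / 2) := by
    rw [← Real.rpow_add hx₀]
    push_cast
    ring_nf
  have hyL : C * y ^ ((L : ℝ) / 2) = C * (y / x) ^ ((L : ℝ) / 2) * x ^ ((L : ℝ) / 2) := by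
    rw [Real.div_rpow hy hx₀.le, mul_assoc, div_mul_cancel₀ _ (by positivity)]
  rw [hsplit, hyL]
  refine ⟨mul_le_mul_of_nonneg_right hsmall hxL, fun hK => ?_⟩
  have := mul_le_mul_of_nonneg_right (hsmall_of_four_le hK) hxL
  linarith

/-- Fix `n ≥ 3` and `m_P + m_F ≥ 2`. There is a bound `M` (depending only on `n`, `m_P`,
`m_F`) such that for any product of `m_P` Eisenstein `q`-expansions of even weights `≥ 4`
and `m_F` Deligne-bounded cusp sequences, if the total weight `ℓ` exceeds `M` then the
`n`-th coefficient of the product has absolute value at most `n^(ℓ/2 - 1)`. -/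
theorem eis_cusp_product_coeff_small (n : ℕ) (hn : 3 ≤ n) (mP mF : ℕ)
    (hm : 2 ≤ mP + mF) :
    ∃ M : ℝ, ∀ (k : Fin mP → ℕ), (∀ i, Even (k i) ∧ 4 ≤ k i) →
      ∀ (a : Fin mF → ℕ → ℂ) (ℓ : Fin mF → ℕ),
        (∀ j, IsDeligneCusp (a j) (ℓ j)) →
        M < (((∑ i, k i) + ∑ j, ℓ j : ℕ) : ℝ) →
        ‖PowerSeries.coeff (R := ℂ) n
            ((∏ i, eisPS (k i)) * ∏ j, PowerSeries.mk (a j))‖ ≤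
          (n : ℝ) ^ ((((∑ i, k i) + ∑ j, ℓ j : ℕ) : ℝ) / 2 - 1) := by
  set CE : ℝ := ((n + 1) * exp (4 * π * n)) ^ mP
  set CF : ℝ := (2 * (n - 1 : ℕ)) ^ mF
  obtain ⟨M, hM⟩ := exists_forall_mul_rpow_le (x := n) (y := (n - 1 : ℕ))
    (C := (1 + n * CE) * CF)
    (by exact_mod_cast hn) (by positivity) (by exact_mod_cast (by omega : n - 1 < n))
    (by positivity)
  refine ⟨M, fun k hk a ℓ ha hKL => ?_⟩
  obtain ⟨hsmall, hsmall_of_four_le⟩ := hM _ _ hKL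
  have hE : ∀ p ≤ n, ‖coeff p (∏ i, eisPS (k i))‖ ≤ CE := fun p hp => by
    simpa using norm_coeff_prod_eisPS_le (k := k) (fun i => by linarith [(hk i).2]) hp
  obtain _ | mF := mF
  · simp only [CF, univ_eq_empty, sum_empty, prod_empty, mul_one, pow_zero, Nat.cast_zero,
      zero_div, Real.rpow_zero, add_zero] at hsmall ⊢
    refine (hE n le_rfl).trans (le_trans ?_ hsmall)
    nlinarith [show 0 ≤ CE by positivity, show (3 : ℝ) ≤ n by exact_mod_cast hn]
  have hF : ∀ q < n, ‖coeff q (∏ j, PowerSeries.mk (a j))‖ ≤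
      CF * ((n - 1 : ℕ) : ℝ) ^ (((∑ j, ℓ j : ℕ) : ℝ) / 2) := fun q hq => by
    simpa using norm_coeff_prod_mk_le ha (N := n - 1) (by simp; omega)
  have hF₀ : 0 ≤ CF * ((n - 1 : ℕ) : ℝ) ^ (((∑ j, ℓ j : ℕ) : ℝ) / 2) := by positivity
  refine (norm_coeff_mul_le_norm_coeff_add (by simp) hE hF).trans ?_
  obtain _ | mF := mF
  · have hK : 4 ≤ ∑ i, k i :=
      (hk ⟨0, by omega⟩).2.trans (single_le_sum (by simp) (mem_univ _))
    have hFn : ‖coeff n (∏ j, PowerSeries.mk (a j))‖ ≤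
        2 * (n : ℝ) ^ (((∑ j, ℓ j : ℕ) : ℝ) / 2) := by
      simpa using (ha 0).2.2.2 n (by omega)
    linarith [hsmall_of_four_le hK]
  · have hFn := norm_coeff_prod_mk_le ha (N := n - 1) (q := n) (by simp; omega)
    simp only [Fintype.card_fin] at hFn
    linarith
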